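/- Let R be a ring, G a finite group of order n with listing g_1, …, g_n, and u ∈ RG a unit with inverse u⁻¹, so that U = σ(u) and U⁻¹ = σ(u⁻¹) satisfy UU⁻¹ = U⁻¹U = I. For 1 ≤ r < n, write U = (A; B) where A consists of the first r rows of U, and write U⁻¹ = (C D) where D consists of the last n − r columns of U⁻¹. Then for every row vector ȳ ∈ R^n: there exists x̄ ∈ R^r with ȳ = x̄A if and only if ȳD = 0. -/

import Mathlib

/-- The `RG`-matrix of an element `w` of the group ring `RG`, relative to a
listing `g : Fin n ≃ G` of the elements of `G`. -/
noncomputable def rgMatrix {R : Type*} [Semiring R] {G : Type*} [Group G] {n : ℕ}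
    (g : Fin n ≃ G) (w : MonoidAlgebra R G) : Matrix (Fin n) (Fin n) R :=
  Matrix.of fun i j => w.coeff ((g i)⁻¹ * g j)

/-!
`σ` is multiplicative and unital, so `U = σ(u)` and `σ(u⁻¹)` are mutually inverse matrices.
For mutually inverse `U`, `V` and complementary index sets `S`, `T`, the rows of `U` indexed
by `S` span exactly the row vectors killed by the columns of `V` indexed by `T`: the rows of `U`
are orthogonal to those columns since `U V = 1`, and conversely `y = (y V) U` where `y V`
vanishes on `T` once `y` is killed by those columns.
-/

open Matrix Function

section rgMatrix

variable {R : Type*} [Semiring R] {G : Type*} [Group G] {n : ℕ}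

lemma rgMatrix_mul (g : Fin n ≃ G) (u v : MonoidAlgebra R G) :
    rgMatrix g (u * v) = rgMatrix g u * rgMatrix g v := by
  have : Fintype G := Fintype.ofEquiv _ g
  ext i j
  rw [mul_apply]
  change (u * v).coeff ((g i)⁻¹ * g j) = _
  rw [MonoidAlgebra.coeff_mul_apply_left, Finsupp.sum_fintype _ _ (by simp)]
  -- substitute `(g i)⁻¹ * g k` for the summation variable of the convolution
  refine (Fintype.sum_equiv (g.trans (Equiv.mulLeft (g i)⁻¹)) _ _ fun k => ?_).symm
  simp [rgMatrix, _root_.mul_inv_rev, mul_assoc]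

lemma rgMatrix_one (g : Fin n ≃ G) : rgMatrix (R := R) g 1 = 1 := by
  classical
  ext i j
  change (1 : MonoidAlgebra R G).coeff ((g i)⁻¹ * g j) = _
  rw [MonoidAlgebra.one_def, MonoidAlgebra.coeff_single, Finsupp.single_apply, one_apply,
    eq_comm (a := (1 : G)), inv_mul_eq_one, g.apply_eq_iff_eq]
  congr

lemma rgMatrix_mul_eq_one (g : Fin n ≃ G) {u v : MonoidAlgebra R G} (h : u * v = 1) :
    rgMatrix g u * rgMatrix g v = 1 := by
  rw [← rgMatrix_mul, h, rgMatrix_one]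

end rgMatrix

section Complementary

variable {R : Type*} [Ring R] {ι κ μ : Type*} [Fintype ι] [DecidableEq ι]

lemma submatrix_mul_submatrix_eq_zero {U V : Matrix ι ι R} (hUV : U * V = 1)
    {e : κ → ι} {f : μ → ι} (hef : ∀ k l, e k ≠ f l) :
    U.submatrix e id * V.submatrix id f = 0 := by
  ext k l
  rw [← submatrix_mul _ _ _ _ _ bijective_id, hUV, submatrix_apply, one_apply_ne (hef k l),
    Matrix.zero_apply]

lemma exists_vecMul_submatrix_iff_vecMul_submatrix_eq_zero [Fintype κ] {U V : Matrix ι ι R}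
    (hUV : U * V = 1) (hVU : V * U = 1) {e : κ → ι} {f : μ → ι} (he : Injective e)
    (hf : Set.range f = (Set.range e)ᶜ) (y : ι → R) :
    (∃ x, y = x ᵥ* U.submatrix e id) ↔ y ᵥ* V.submatrix id f = 0 := by
  constructor
  · rintro ⟨x, rfl⟩
    have hef : ∀ k l, e k ≠ f l := fun k l hkl =>
      (Set.ext_iff.mp hf (f l)).mp (Set.mem_range_self l) ⟨k, hkl⟩
    rw [vecMul_vecMul, submatrix_mul_submatrix_eq_zero hUV hef, vecMul_zero]
  · intro hy
    set z := y ᵥ* V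
    have hz : ∀ i ∉ Set.range e, z i = 0 := by
      intro i hi
      obtain ⟨l, rfl⟩ : i ∈ Set.range f := hf ▸ hi
      exact congrFun hy l
    refine ⟨z ∘ e, funext fun j => ?_⟩
    calc y j = (z ᵥ* U) j := by rw [vecMul_vecMul, hVU, vecMul_one]
      _ = ∑ i, z i * U i j := rfl
      _ = ∑ k, z (e k) * U (e k) j :=
        (Fintype.sum_of_injective e he _ _ (fun i hi => by rw [hz i hi, zero_mul])
          fun _ => rfl).symm
      _ = (z ∘ e ᵥ* U.submatrix e id) j := rfl

end Complementary

lemma range_natAdd_val_eq_compl_range_castLE {r n : ℕ} (h : r ≤ n) :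
    Set.range (fun j : Fin (n - r) => (⟨r + j, by omega⟩ : Fin n)) =
      (Set.range (Fin.castLE h))ᶜ := by
  ext i
  simp only [Fin.range_castLE, Set.mem_compl_iff, Set.mem_ofPred_eq, not_lt, Set.mem_range,
    Fin.ext_iff]
  exact ⟨fun ⟨j, hj⟩ => hj ▸ Nat.le_add_right r j,
    fun hi => ⟨⟨i - r, by omega⟩, Nat.add_sub_cancel' hi⟩⟩

/-- let `u` be a unit of `RG` with inverse `uinv`, `U = σ(u)`,
`U⁻¹ = σ(uinv)`. For `1 ≤ r < n`, let `A` be the first `r` rows of `U` and `D` the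
last `n - r` columns of `U⁻¹`. Then for every row vector `ȳ ∈ R^n`:
`ȳ = x̄ A` for some `x̄ ∈ R^r` iff `ȳ D = 0`. -/
theorem stmt13 {R : Type*} [Ring R] {G : Type*} [Group G] {n r : ℕ}
    (g : Fin n ≃ G) (u uinv : MonoidAlgebra R G)
    (h1 : u * uinv = 1) (h2 : uinv * u = 1)
    (hrn : r < n)
    (A : Matrix (Fin r) (Fin n) R)
    (hA : ∀ (k : Fin r) (j : Fin n), A k j = rgMatrix g u (Fin.castLE hrn.le k) j)
    (D : Matrix (Fin n) (Fin (n - r)) R)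
    (hD : ∀ (a : Fin n) (j : Fin (n - r)),
      D a j = rgMatrix g uinv a ⟨r + (j : ℕ), by have := j.isLt; omega⟩)
    (y : Fin n → R) :
    (∃ x : Fin r → R, y = Matrix.vecMul x A) ↔ Matrix.vecMul y D = 0 := by
  have hA' : A = (rgMatrix g u).submatrix (Fin.castLE hrn.le) id := Matrix.ext hA
  have hD' : D = (rgMatrix g uinv).submatrix id
      (fun j : Fin (n - r) => (⟨r + j, by omega⟩ : Fin n)) := Matrix.ext hD
  rw [hA', hD']
  exact exists_vecMul_submatrix_iff_vecMul_submatrix_eq_zero (rgMatrix_mul_eq_one g h1)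
    (rgMatrix_mul_eq_one g h2) (Fin.castLE_injective hrn.le)
    (range_natAdd_val_eq_compl_range_castLE hrn.le) y
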